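/- arXiv:1902.09712 — 3 statements merged into one kernel-verified Lean document; each statement's English description precedes it below -/
import Mathlib

section
/- Let m ≥ 1, D ≥ 1, and let g: ℤ^D → ℝ be a homogeneous polynomial of degree m, g(n) = Σ_{|j|=m} a_j n^j (multi-index notation). Then there exist C = C(D,m) > 0 and a positive integer Q = Q(D,m) such that: if ‖g(n)‖_𝕋 ≤ C₀ for all n ∈ ℤ^D with |n₁|+⋯+|n_D| ≤ m, then ‖Q a_j‖_𝕋 ≤ C₀·C for every multi-index j with |j| = m. (Here ‖·‖_𝕋 is the distance to the nearest integer.) One may take Q = (m!)^D and C = 2^D Q. -/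
/-!
The mixed finite difference `Δ_{e₁}^{j₁} ⋯ Δ_{e_D}^{j_D} g (0)` is an integer combination of the
values `g k`, `0 ≤ k ≤ j`, whose weights have total absolute value `2^|j|`. For `g` homogeneous of
degree `|j|` it annihilates every monomial except `n^j`, on which it equals `j₁! ⋯ j_D!`. So
`j₁! ⋯ j_D! · a_j` is within `2^m C₀` of an integer, and multiplying by the integer
`(m!)^D / (j₁! ⋯ j_D!)` gives `Q = (m!)^D` and `C = (m!)^D 2^m`.
-/

/-- Distance of a real number to the nearest integer, `‖x‖_𝕋`. -/
noncomputable def torusNorm (x : ℝ) : ℝ := ⨅ k : ℤ, |x - (k : ℝ)|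

open Finset Nat

lemma torusNorm_eq_norm (x : ℝ) : torusNorm x = ‖(x : UnitAddCircle)‖ := by
  rw [UnitAddCircle.norm_eq]
  refine le_antisymm (ciInf_le ⟨0, ?_⟩ (round x)) (le_ciInf fun k => round_le x k)
  rintro _ ⟨k, rfl⟩
  exact abs_nonneg _

lemma torusNorm_nonneg (x : ℝ) : 0 ≤ torusNorm x := torusNorm_eq_norm x ▸ norm_nonneg _

lemma torusNorm_intCast_mul_le (c : ℤ) (x : ℝ) :
    torusNorm (c * x) ≤ |(c : ℝ)| * torusNorm x := by
  simp only [torusNorm_eq_norm, ← zsmul_eq_mul, AddCircle.coe_zsmul]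
  exact (norm_zsmul_le c _).trans_eq (by rw [Int.norm_eq_abs])

lemma torusNorm_sum_le {α : Type*} (s : Finset α) (x : α → ℝ) :
    torusNorm (∑ k ∈ s, x k) ≤ ∑ k ∈ s, torusNorm (x k) := by
  simp only [torusNorm_eq_norm]
  exact (congrArg norm (map_sum (QuotientAddGroup.mk' _) x s)).trans_le (norm_sum_le _ _)

lemma sum_range_alternating_choose_mul_pow_eq_fwdDiff_iter (d e : ℕ) :
    ∑ k ∈ range (d + 1), ((-1 : ℤ) ^ (d - k) * d.choose k : ℝ) * (k : ℝ) ^ e =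
      (fwdDiff 1)^[d] (fun r : ℝ => r ^ e) 0 := by
  simp [fwdDiff_iter_eq_sum_shift, zsmul_eq_mul]

section MixedDifference

variable {ι : Type*} [Fintype ι]

lemma exists_lt_of_sum_eq_of_ne {j e : ι → ℕ} (hsum : ∑ i, e i = ∑ i, j i) (hne : e ≠ j) :
    ∃ i, e i < j i := by
  by_contra! h
  exact hne (funext fun i =>
    ((sum_eq_sum_iff_of_le fun i _ => h i).mp hsum.symm i (mem_univ i)).symm)

lemma prod_factorial_dvd_factorial_pow {j : ι → ℕ} {m : ℕ} (h : ∀ i, j i ≤ m) :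
    ∏ i, (j i)! ∣ m ! ^ Fintype.card ι := by
  rw [← Finset.card_univ, ← prod_const]
  exact prod_dvd_prod_of_dvd _ _ fun i _ => factorial_dvd_factorial (h i)

variable [DecidableEq ι]

lemma Iic_eq_piFinset_range (j : ι → ℕ) :
    Iic j = Fintype.piFinset fun i => range (j i + 1) := by
  simp only [range_succ_eq_Iic]
  rfl

/-- The coefficient of `f k` in `Δ_{e₁}^{j₁} ⋯ Δ_{e_D}^{j_D} f (0)`. -/
def mixedDiffWeight (j k : ι → ℕ) : ℤ := ∏ i, (-1) ^ (j i - k i) * (j i).choose (k i)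

lemma sum_mixedDiffWeight_mul_prod_pow (j e : ι → ℕ) :
    ∑ k ∈ Iic j, (mixedDiffWeight j k : ℝ) * ∏ i, (k i : ℝ) ^ e i =
      ∏ i, (fwdDiff 1)^[j i] (fun r : ℝ => r ^ e i) 0 := by
  simp only [Iic_eq_piFinset_range, mixedDiffWeight, ← sum_range_alternating_choose_mul_pow_eq_fwdDiff_iter,
    prod_univ_sum, Int.cast_prod, ← prod_mul_distrib]
  push_cast
  rfl

lemma sum_mixedDiffWeight_mul_prod_pow_of_sum_eq {j e : ι → ℕ} (hsum : ∑ i, e i = ∑ i, j i) :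
    ∑ k ∈ Iic j, (mixedDiffWeight j k : ℝ) * ∏ i, (k i : ℝ) ^ e i =
      if e = j then ∏ i, ((j i)! : ℝ) else 0 := by
  rw [sum_mixedDiffWeight_mul_prod_pow]
  split_ifs with h
  · subst h
    exact prod_congr rfl fun i _ => by rw [fwdDiff_iter_eq_factorial]; rfl
  · obtain ⟨i, hi⟩ := exists_lt_of_sum_eq_of_ne hsum h
    exact prod_eq_zero (mem_univ i) (by rw [fwdDiff_iter_pow_eq_zero_of_lt hi]; rfl)

lemma sum_mixedDiffWeight_mul_homogeneous {J : Finset (ι → ℕ)} {j : ι → ℕ} (hj : j ∈ J)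
    (hJ : ∀ e ∈ J, ∑ i, e i = ∑ i, j i) (a : (ι → ℕ) → ℝ) :
    ∑ k ∈ Iic j, (mixedDiffWeight j k : ℝ) * ∑ e ∈ J, a e * ∏ i, (k i : ℝ) ^ e i =
      (∏ i, ((j i)! : ℝ)) * a j := by
  simp_rw [mul_sum, mul_left_comm _ (a _)]
  rw [sum_comm]
  simp_rw [← mul_sum]
  rw [sum_congr rfl fun e he => by rw [sum_mixedDiffWeight_mul_prod_pow_of_sum_eq (hJ e he)]]
  simp [hj, mul_comm]

lemma sum_abs_mixedDiffWeight (j : ι → ℕ) :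
    ∑ k ∈ Iic j, |(mixedDiffWeight j k : ℝ)| = 2 ^ ∑ i, j i := by
  simp only [mixedDiffWeight, Int.cast_prod, Int.cast_mul, Int.cast_pow, Int.cast_neg,
    Int.cast_one, Int.cast_natCast, abs_prod, abs_mul, abs_pow, abs_neg, abs_one, one_pow, one_mul,
    Nat.abs_cast]
  rw [Iic_eq_piFinset_range, ← prod_univ_sum _ fun i x => ((j i).choose x : ℝ),
    ← prod_pow_eq_pow_sum]
  exact prod_congr rfl fun i _ => mod_cast Nat.sum_range_choose (j i)

lemma torusNorm_sum_mixedDiffWeight_mul_le (j : ι → ℕ) (f : (ι → ℕ) → ℝ) {C₀ : ℝ}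
    (hf : ∀ k ≤ j, torusNorm (f k) ≤ C₀) :
    torusNorm (∑ k ∈ Iic j, (mixedDiffWeight j k : ℝ) * f k) ≤ 2 ^ (∑ i, j i) * C₀ := by
  calc _ ≤ ∑ k ∈ Iic j, |(mixedDiffWeight j k : ℝ)| * torusNorm (f k) :=
        (torusNorm_sum_le _ _).trans (sum_le_sum fun k _ => torusNorm_intCast_mul_le _ _)
    _ ≤ ∑ k ∈ Iic j, |(mixedDiffWeight j k : ℝ)| * C₀ :=
        sum_le_sum fun k hk => mul_le_mul_of_nonneg_left (hf k (mem_Iic.mp hk)) (abs_nonneg _)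
    _ = 2 ^ (∑ i, j i) * C₀ := by rw [← sum_mul, sum_abs_mixedDiffWeight]

lemma torusNorm_prod_factorial_mul_coeff_le {J : Finset (ι → ℕ)} {j : ι → ℕ} (hj : j ∈ J)
    (hJ : ∀ e ∈ J, ∑ i, e i = ∑ i, j i) (a : (ι → ℕ) → ℝ) {C₀ : ℝ}
    (hC₀ : ∀ k ≤ j, torusNorm (∑ e ∈ J, a e * ∏ i, (k i : ℝ) ^ e i) ≤ C₀) :
    torusNorm ((∏ i, ((j i)! : ℝ)) * a j) ≤ 2 ^ (∑ i, j i) * C₀ :=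
  sum_mixedDiffWeight_mul_homogeneous hj hJ a ▸ torusNorm_sum_mixedDiffWeight_mul_le j _ hC₀

end MixedDifference

theorem stmt9_general (D m : ℕ) :
    ∃ (C : ℝ) (Q : ℕ), 0 < C ∧ 0 < Q ∧
      ∀ (a : (Fin D → ℕ) → ℝ) (C₀ : ℝ),
        (∀ n : Fin D → ℤ, (∑ i, |n i|) ≤ (m : ℤ) →
          torusNorm (∑ j ∈ (Fintype.piFinset fun _ : Fin D => Finset.range (m + 1)).filter
              (fun j => ∑ i, j i = m), a j * ∏ i, (n i : ℝ) ^ (j i)) ≤ C₀) →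
        ∀ j : Fin D → ℕ, (∑ i, j i = m) → torusNorm ((Q : ℝ) * a j) ≤ C₀ * C := by
  refine ⟨(m ! : ℝ) ^ D * 2 ^ m, m ! ^ D, by positivity, by positivity, ?_⟩
  intro a C₀ hg j hj
  have hjm : ∀ i, j i ≤ m := fun i => hj ▸ single_le_sum (fun _ _ => Nat.zero_le _) (mem_univ i)
  have hC₀ : 0 ≤ C₀ := (torusNorm_nonneg _).trans (hg 0 (by simp))
  set J := (Fintype.piFinset fun _ : Fin D => range (m + 1)).filter fun e => ∑ i, e i = m
  have hjJ : j ∈ J :=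
    mem_filter.mpr ⟨Fintype.mem_piFinset.mpr fun i => mem_range.mpr (lt_succ_of_le (hjm i)), hj⟩
  have hsample : ∀ k ≤ j, torusNorm (∑ e ∈ J, a e * ∏ i, (k i : ℝ) ^ e i) ≤ C₀ := fun k hk => by
    refine (hg (fun i => k i) ?_).trans_eq' (by simp)
    simp only [Nat.abs_cast]
    exact_mod_cast hj ▸ sum_le_sum fun i _ => hk i
  have hbound := torusNorm_prod_factorial_mul_coeff_le hjJ
    (fun e he => (mem_filter.mp he).2.trans hj.symm) a hsample
  rw [hj] at hbound
  obtain ⟨q, hq⟩ := prod_factorial_dvd_factorial_pow hjm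
  rw [Fintype.card_fin] at hq
  have hq_le : (q : ℝ) ≤ (m ! : ℝ) ^ D := by
    exact_mod_cast hq ▸ Nat.le_mul_of_pos_left q (prod_pos fun i _ => factorial_pos (j i))
  calc torusNorm ((m ! ^ D : ℕ) * a j) = torusNorm ((q : ℤ) * ((∏ i, ((j i)! : ℝ)) * a j)) := by
        rw [hq]
        congr 1
        push_cast
        ring
    _ ≤ q * (2 ^ m * C₀) := by
        simpa only [Int.cast_natCast, Nat.abs_cast] using
          (torusNorm_intCast_mul_le q _).trans (mul_le_mul_of_nonneg_left hbound (abs_nonneg _))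
    _ ≤ (m ! : ℝ) ^ D * (2 ^ m * C₀) := by gcongr
    _ = C₀ * ((m ! : ℝ) ^ D * 2 ^ m) := by ring

/-- If all the values of a homogeneous polynomial of degree `m` in `D`
variables are within `C₀` of integers at the points `n` with `|n₁|+⋯+|n_D| ≤ m`, then
all its coefficients, multiplied by a fixed positive integer `Q = Q(D,m)`, are within
`C₀·C` of integers, where `C = C(D,m) > 0`. -/
theorem stmt9 (D m : ℕ) (hD : 1 ≤ D) (hm : 1 ≤ m) :
    ∃ (C : ℝ) (Q : ℕ), 0 < C ∧ 0 < Q ∧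
      ∀ (a : (Fin D → ℕ) → ℝ) (C₀ : ℝ),
        (∀ n : Fin D → ℤ, (∑ i, |n i|) ≤ (m : ℤ) →
          torusNorm (∑ j ∈ (Fintype.piFinset fun _ : Fin D => Finset.range (m + 1)).filter
              (fun j => ∑ i, j i = m), a j * ∏ i, (n i : ℝ) ^ (j i)) ≤ C₀) →
        ∀ j : Fin D → ℕ, (∑ i, j i = m) → torusNorm ((Q : ℝ) * a j) ≤ C₀ * C :=
  stmt9_general D m
end

section
/- Let D ≥ 1 and let N be a prime. There exists a constant C = C(D) > 0 such that for every function a: (ℤ/Nℤ)^D → ℂ and every D-dimensional arithmetic progression P ⊆ (ℤ/Nℤ)^D (a product of arithmetic progressions in each coordinate), |𝔼_{n ∈ (ℤ/Nℤ)^D} 1_P(n) a(n)| ≤ C ‖a‖_{U²((ℤ/Nℤ)^D)}. -/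
open scoped BigOperators

/-- The fourth power of the Gowers `U²`-norm of `f : (ℤ/Nℤ)^D → ℂ`:
`𝔼_{n,h₁,h₂} f(n) conj(f(n+h₁)) conj(f(n+h₂)) f(n+h₁+h₂)`. -/
noncomputable def gowersU2p4 {D N : ℕ} [NeZero N] (f : (Fin D → ZMod N) → ℂ) : ℂ :=
  (1 / (N : ℂ) ^ (3 * D)) *
    ∑ n : Fin D → ZMod N, ∑ h₁ : Fin D → ZMod N, ∑ h₂ : Fin D → ZMod N,
      f n * (starRingEnd ℂ) (f (n + h₁)) * (starRingEnd ℂ) (f (n + h₂)) * f (n + h₁ + h₂)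

/-!
Write `b` for the indicator of `P`. Parseval turns `𝔼 1_P a` into `∑_ψ â(ψ) conj (b̂(ψ))`, and
Hölder with exponents `4` and `4/3` bounds this by `‖â‖_4 ‖b̂‖_{4/3}`, where
`‖â‖_4⁴ = ‖a‖_{U²}⁴`. Since `P` is a product of one-dimensional progressions, `b̂` factors over
the coordinates. For a progression of step `d ≠ 0` in `ℤ/Nℤ` (`N` prime), summing the geometric
series gives `|b̂(η)| ≤ 1 / (2 |(ηd).valMinAbs|)`; as `θ ↦ θ.valMinAbs` is injective,
`∑_η |b̂(η)|^{4/3} ≤ 1 + ∑_{z ∈ ℤ} |z|^{-4/3}`, uniformly in `N`.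
-/

open Finset ComplexConjugate

theorem sum_mul_pow_four_le {ι : Type*} (s : Finset ι) {f g : ι → ℝ} (hf : ∀ i ∈ s, 0 ≤ f i)
    (hg : ∀ i ∈ s, 0 ≤ g i) :
    (∑ i ∈ s, f i * g i) ^ 4 ≤ (∑ i ∈ s, f i ^ 4) * (∑ i ∈ s, g i ^ (4 / 3 : ℝ)) ^ 3 := by
  have hpq : (4 : ℝ).HolderConjugate (4 / 3) :=
    Real.holderConjugate_iff.mpr ⟨by norm_num, by norm_num⟩
  have holder := Real.inner_le_Lp_mul_Lq_of_nonneg s hpq hf hg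
  have hA : 0 ≤ ∑ i ∈ s, f i ^ 4 := sum_nonneg fun i hi => by have := hf i hi; positivity
  have hB : 0 ≤ ∑ i ∈ s, g i ^ (4 / 3 : ℝ) := sum_nonneg fun i hi => by have := hg i hi; positivity
  have h4 : ∀ x : ℝ, x ^ (4 : ℝ) = x ^ 4 := fun x => by exact_mod_cast Real.rpow_natCast x 4
  simp_rw [h4] at holder
  calc (∑ i ∈ s, f i * g i) ^ 4
      ≤ ((∑ i ∈ s, f i ^ 4) ^ (1 / 4 : ℝ) * (∑ i ∈ s, g i ^ (4 / 3 : ℝ)) ^ (1 / (4 / 3) : ℝ)) ^ 4 :=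
        pow_le_pow_left₀ (sum_nonneg fun i hi => mul_nonneg (hf i hi) (hg i hi)) holder 4
    _ = (∑ i ∈ s, f i ^ 4) * (∑ i ∈ s, g i ^ (4 / 3 : ℝ)) ^ 3 := by
        rw [mul_pow, ← Real.rpow_mul_natCast hA, ← Real.rpow_mul_natCast hB]
        norm_num

section FiniteAbelian

variable {G : Type*} [AddCommGroup G] [Fintype G]

noncomputable def fourierChar (f : G → ℂ) (ψ : AddChar G ℂ) : ℂ :=
  (Fintype.card G : ℂ)⁻¹ * ∑ n, f n * conj (ψ n)

theorem fourierChar_mul_conj (f g : G → ℂ) (ψ : AddChar G ℂ) :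
    fourierChar f ψ * conj (fourierChar g ψ) =
      (Fintype.card G : ℂ)⁻¹ ^ 2 * ∑ n, ∑ m, f n * conj (g m) * ψ (m - n) := by
  simp only [fourierChar, map_mul, map_inv₀, map_natCast, map_sum, Complex.conj_conj]
  rw [mul_mul_mul_comm, sum_mul_sum, ← sq]
  simp only [sub_eq_add_neg, AddChar.map_add_eq_mul, AddChar.map_neg_eq_conj]
  congr 1
  refine sum_congr rfl fun n _ => sum_congr rfl fun m _ => by ring

theorem sum_fourierChar_mul_conj (f g : G → ℂ) :
    ∑ ψ, fourierChar f ψ * conj (fourierChar g ψ) =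
      (Fintype.card G : ℂ)⁻¹ * ∑ n, f n * conj (g n) := by
  classical
  have hG : (Fintype.card G : ℂ) ≠ 0 := Nat.cast_ne_zero.mpr Fintype.card_ne_zero
  have orth : ∀ n, ∑ ψ : AddChar G ℂ, ∑ m, f n * conj (g m) * ψ (m - n) =
      Fintype.card G * (f n * conj (g n)) := fun n => by
    rw [Finset.sum_comm]
    simp_rw [← mul_sum, AddChar.sum_apply_eq_ite, sub_eq_zero, mul_ite, mul_zero,
      Finset.sum_ite_eq', if_pos (mem_univ _), mul_comm]
  simp_rw [fourierChar_mul_conj, ← mul_sum]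
  rw [Finset.sum_comm]
  simp_rw [orth, ← mul_sum]
  field_simp

theorem fourierChar_autocorrelation (f : G → ℂ) (ψ : AddChar G ℂ) :
    fourierChar (fun h => ∑ m, f (m + h) * conj (f m)) ψ =
      Fintype.card G * (fourierChar f ψ * conj (fourierChar f ψ)) := by
  have hG : (Fintype.card G : ℂ) ≠ 0 := Nat.cast_ne_zero.mpr Fintype.card_ne_zero
  have shift : ∀ m, ∑ h, f (m + h) * conj (f m) * conj (ψ h) =
      ∑ n, f n * conj (f m) * ψ (m - n) := fun m => by
    refine Fintype.sum_equiv (Equiv.addLeft m) _ _ fun h => ?_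
    simp [AddChar.map_neg_eq_conj]
  rw [fourierChar_mul_conj, fourierChar]
  simp_rw [sum_mul]
  rw [Finset.sum_comm]
  simp_rw [shift]
  rw [Finset.sum_comm]
  field_simp

theorem norm_fourierChar_le (f : G → ℂ) (ψ : AddChar G ℂ) :
    ‖fourierChar f ψ‖ ≤ (Fintype.card G : ℝ)⁻¹ * ∑ n, ‖f n‖ := by
  rw [fourierChar, norm_mul, norm_inv, Complex.norm_natCast]
  gcongr
  refine (norm_sum_le _ _).trans (sum_le_sum fun n _ => ?_)
  rw [norm_mul, Complex.norm_conj, AddChar.norm_apply, mul_one]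

theorem norm_fourierChar_indicator_one_le (S : Set G) (ψ : AddChar G ℂ) :
    ‖fourierChar (S.indicator 1) ψ‖ ≤ 1 := by
  refine (norm_fourierChar_le _ ψ).trans ?_
  have hG : (0 : ℝ) < Fintype.card G := by exact_mod_cast Fintype.card_pos
  rw [inv_mul_le_one₀ hG]
  calc ∑ n, ‖S.indicator (1 : G → ℂ) n‖ ≤ ∑ _n : G, (1 : ℝ) :=
        sum_le_sum fun n _ => (norm_indicator_le_norm_self _ _).trans (by simp)
    _ = Fintype.card G := by simp

theorem norm_fourierChar_indicator_le_of_subset_singleton {S : Set G} {a : G} (hS : S ⊆ {a})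
    (ψ : AddChar G ℂ) : ‖fourierChar (S.indicator 1) ψ‖ ≤ (Fintype.card G : ℝ)⁻¹ := by
  classical
  refine (norm_fourierChar_le _ ψ).trans (mul_le_of_le_one_right (by positivity) ?_)
  calc ∑ n, ‖S.indicator (1 : G → ℂ) n‖ ≤ ∑ n, if n = a then (1 : ℝ) else 0 :=
        sum_le_sum fun n _ => by
          split_ifs with hn
          · exact (norm_indicator_le_norm_self _ _).trans (by simp)
          · rw [Set.indicator_of_notMem fun h => hn (hS h), norm_zero]
    _ = 1 := by simp

/-- The inner double sum is `|F h₁|²` for the autocorrelation `F` of `f`, whose Fourier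
coefficients are `card G • |f̂|²`, so Parseval applies to `F`. -/
theorem sum_gowers_eq (f : G → ℂ) :
    ∑ n, ∑ h₁, ∑ h₂, f n * conj (f (n + h₁)) * conj (f (n + h₂)) * f (n + h₁ + h₂) =
      (Fintype.card G : ℂ) ^ 3 * ∑ ψ, (‖fourierChar f ψ‖ : ℂ) ^ 4 := by
  have hG : (Fintype.card G : ℂ) ≠ 0 := Nat.cast_ne_zero.mpr Fintype.card_ne_zero
  set F : G → ℂ := fun h => ∑ m, f (m + h) * conj (f m) with hF
  have inner : ∀ h₁, ∑ n, ∑ h₂, f n * conj (f (n + h₁)) * conj (f (n + h₂)) * f (n + h₁ + h₂) =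
      F h₁ * conj (F h₁) := fun h₁ => by
    have shift : ∀ n, ∑ h₂, conj (f (n + h₂)) * f (n + h₂ + h₁) = F h₁ := fun n =>
      Fintype.sum_equiv (Equiv.addLeft n) _ _ fun h₂ => mul_comm _ _
    calc _ = ∑ n, f n * conj (f (n + h₁)) * ∑ h₂, conj (f (n + h₂)) * f (n + h₂ + h₁) := by
          simp_rw [mul_sum, add_right_comm _ h₁, mul_assoc]
      _ = conj (F h₁) * F h₁ := by
          simp_rw [shift, ← sum_mul]
          congr 1
          simp only [hF, map_sum, map_mul, Complex.conj_conj]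
          exact sum_congr rfl fun n _ => mul_comm _ _
      _ = F h₁ * conj (F h₁) := mul_comm _ _
  rw [Finset.sum_comm]
  simp_rw [inner]
  rw [← mul_inv_cancel_left₀ hG (∑ h, F h * conj (F h)), ← sum_fourierChar_mul_conj]
  have hF_hat : ∀ ψ, fourierChar F ψ = Fintype.card G * (‖fourierChar f ψ‖ : ℂ) ^ 2 := fun ψ =>
    (fourierChar_autocorrelation f ψ).trans (by rw [Complex.mul_conj'])
  simp_rw [hF_hat, map_mul, map_pow, map_natCast, Complex.conj_ofReal, mul_sum]
  refine sum_congr rfl fun ψ _ => by ring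

theorem norm_expect_mul_conj_pow_four_le (f g : G → ℂ) :
    ‖(Fintype.card G : ℂ)⁻¹ * ∑ n, f n * conj (g n)‖ ^ 4 ≤
      (∑ ψ, ‖fourierChar f ψ‖ ^ 4) * (∑ ψ, ‖fourierChar g ψ‖ ^ (4 / 3 : ℝ)) ^ 3 := by
  rw [← sum_fourierChar_mul_conj]
  calc _ ≤ (∑ ψ, ‖fourierChar f ψ‖ * ‖fourierChar g ψ‖) ^ 4 := by
        gcongr
        refine (norm_sum_le _ _).trans_eq (sum_congr rfl fun ψ _ => ?_)
        rw [norm_mul, Complex.norm_conj]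
    _ ≤ _ := sum_mul_pow_four_le _ (fun _ _ => norm_nonneg _) fun _ _ => norm_nonneg _

end FiniteAbelian

section Pi

variable {ι : Type*} [Fintype ι] {G : ι → Type*} [∀ i, AddCommGroup (G i)]

def prodChar (ψ : ∀ i, AddChar (G i) ℂ) : AddChar (∀ i, G i) ℂ where
  toFun n := ∏ i, ψ i (n i)
  map_zero_eq_one' := by simp
  map_add_eq_mul' n m := by simp [AddChar.map_add_eq_mul, prod_mul_distrib]

@[simp]
theorem prodChar_apply (ψ : ∀ i, AddChar (G i) ℂ) (n : ∀ i, G i) :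
    prodChar ψ n = ∏ i, ψ i (n i) := rfl

variable [DecidableEq ι] [∀ i, Fintype (G i)]

theorem prodChar_bijective : Function.Bijective (prodChar (G := G)) := by
  refine (Fintype.bijective_iff_injective_and_card _).mpr ⟨fun ψ φ h => ?_, ?_⟩
  · ext i x
    have single : ∀ χ : ∀ i, AddChar (G i) ℂ, prodChar χ (Pi.single i x) = χ i x := fun χ => by
      rw [prodChar_apply, Fintype.prod_eq_single i fun j hj => by
        rw [Pi.single_eq_of_ne hj, AddChar.map_zero_eq_one], Pi.single_eq_same]
    rw [← single ψ, ← single φ, h]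
  · simp [Fintype.card_pi, AddChar.card_eq]

theorem fourierChar_prod (f : ∀ i, G i → ℂ) (ψ : ∀ i, AddChar (G i) ℂ) :
    fourierChar (fun n => ∏ i, f i (n i)) (prodChar ψ) = ∏ i, fourierChar (f i) (ψ i) := by
  simp only [fourierChar, prodChar_apply, map_prod, ← prod_mul_distrib, Fintype.card_pi,
    Nat.cast_prod]
  rw [prod_mul_distrib, Fintype.prod_sum, prod_inv_distrib]

theorem sum_norm_fourierChar_prod_rpow (f : ∀ i, G i → ℂ) (p : ℝ) :
    ∑ ψ, ‖fourierChar (fun n : ∀ i, G i => ∏ i, f i (n i)) ψ‖ ^ p =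
      ∏ i, ∑ φ, ‖fourierChar (f i) φ‖ ^ p := by
  rw [Fintype.prod_sum, ← Fintype.sum_bijective _ prodChar_bijective _ _ fun ψ => rfl]
  refine sum_congr rfl fun ψ _ => ?_
  rw [fourierChar_prod, norm_prod, Real.finsetProd_rpow _ _ fun i _ => norm_nonneg _]
end Pi

theorem norm_geom_sum_le_of_norm_eq_one {z : ℂ} (hz : ‖z‖ = 1) (hz1 : z ≠ 1) (L : ℕ) :
    ‖∑ t ∈ range L, z ^ t‖ ≤ 2 / ‖z - 1‖ := by
  rw [geom_sum_eq hz1, norm_div]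
  gcongr
  calc ‖z ^ L - 1‖ ≤ ‖z ^ L‖ + ‖(1 : ℂ)‖ := norm_sub_le _ _
    _ = 2 := by rw [norm_pow, hz, one_pow, norm_one]; norm_num

theorem four_mul_abs_div_le_norm_stdAddChar_intCast_sub_one {N : ℕ} [NeZero N] {v : ℤ}
    (hv : 2 * |(v : ℝ)| ≤ N) :
    4 * |(v : ℝ)| / N ≤ ‖ZMod.stdAddChar (v : ZMod N) - 1‖ := by
  have hN : (0 : ℝ) < N := by exact_mod_cast Nat.pos_of_ne_zero (NeZero.ne N)
  have hexp : ZMod.stdAddChar (v : ZMod N) =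
      Complex.exp (Complex.I * ((2 * Real.pi * v / N : ℝ) : ℂ)) := by
    rw [ZMod.stdAddChar_coe]
    push_cast; ring_nf
  have hx : |Real.pi * v / N| ≤ Real.pi / 2 := by
    rw [abs_div, abs_mul, abs_of_pos Real.pi_pos, abs_of_pos hN, div_le_div_iff₀ hN two_pos]
    nlinarith [Real.pi_pos]
  rw [hexp, Complex.norm_exp_I_mul_ofReal_sub_one, norm_mul, Real.norm_eq_abs,
    Real.norm_eq_abs, abs_two]
  calc 4 * |(v : ℝ)| / N = 2 * (2 / Real.pi * |Real.pi * v / N|) := by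
        rw [abs_div, abs_mul, abs_of_pos Real.pi_pos, abs_of_pos hN]
        field_simp
        ring
    _ ≤ 2 * |Real.sin (2 * Real.pi * v / N / 2)| := by
        rw [show 2 * Real.pi * v / N / 2 = Real.pi * v / N by ring]
        gcongr
        exact Real.mul_abs_le_abs_sin hx

theorem abs_valMinAbs_pos {N : ℕ} {θ : ZMod N} (hθ : θ ≠ 0) : 0 < |(θ.valMinAbs : ℝ)| := by
  rwa [abs_pos, Int.cast_ne_zero, Ne, ZMod.valMinAbs_eq_zero]

theorem four_mul_abs_valMinAbs_div_le_norm_stdAddChar_sub_one {N : ℕ} [NeZero N] (θ : ZMod N) :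
    4 * |(θ.valMinAbs : ℝ)| / N ≤ ‖ZMod.stdAddChar θ - 1‖ := by
  have hv : 2 * θ.valMinAbs.natAbs ≤ N := by have := ZMod.natAbs_valMinAbs_le θ; omega
  conv_rhs => rw [← ZMod.coe_valMinAbs θ]
  refine four_mul_abs_div_le_norm_stdAddChar_intCast_sub_one ?_
  rw [← Int.cast_abs, ← Int.natCast_natAbs]; exact_mod_cast hv

theorem bijective_mulShift_stdAddChar (N : ℕ) [NeZero N] :
    Function.Bijective (ZMod.stdAddChar (N := N)).mulShift :=
  (Fintype.bijective_iff_injective_and_card _).mpr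
    ⟨AddChar.to_mulShift_inj_of_isPrimitive (ZMod.isPrimitive_stdAddChar N), by simp⟩

section Progression

variable {N : ℕ}

def arithProg (a d : ZMod N) (L : ℕ) : Set (ZMod N) := {y | ∃ t < L, y = a + d * t}

/-- For `N` prime and `d ≠ 0` the first `N` terms of the progression are distinct and exhaust it. -/
theorem sum_indicator_arithProg_mul [Fact N.Prime] (a : ZMod N) {d : ZMod N} (hd : d ≠ 0)
    (L : ℕ) (g : ZMod N → ℂ) :
    ∑ y, (arithProg a d L).indicator 1 y * g y = ∑ t ∈ range (min L N), g (a + d * t) := by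
  have hN := (Fact.out : N.Prime).pos
  have hset : arithProg a d L = ↑((range (min L N)).image fun t : ℕ => a + d * t) := by
    ext y
    simp only [arithProg, Set.mem_ofPred_eq, coe_image, coe_range, Set.mem_image, Set.mem_Iio,
      lt_min_iff]
    constructor
    · rintro ⟨t, ht, rfl⟩
      exact ⟨t % N, ⟨(Nat.mod_le t N).trans_lt ht, Nat.mod_lt t hN⟩, by rw [ZMod.natCast_mod]⟩
    · rintro ⟨t, ⟨ht, -⟩, rfl⟩
      exact ⟨t, ht, rfl⟩
  have hinj : Set.InjOn (fun t : ℕ => a + d * t) (range (min L N)) := by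
    intro s hs t ht hst
    simp only [coe_range, Set.mem_Iio, lt_min_iff] at hs ht
    have : (s : ZMod N) = t := mul_left_cancel₀ hd (add_left_cancel hst)
    rwa [ZMod.natCast_eq_natCast_iff', Nat.mod_eq_of_lt hs.2, Nat.mod_eq_of_lt ht.2] at this
  simp_rw [hset, Set.indicator_apply, mem_coe, Pi.one_apply, ite_mul, one_mul, zero_mul]
  rw [sum_ite_mem, univ_inter, sum_image hinj]

theorem norm_fourierChar_indicator_arithProg_le [Fact N.Prime] (a : ZMod N) {d η : ZMod N}
    (L : ℕ) (hηd : η * d ≠ 0) :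
    ‖fourierChar ((arithProg a d L).indicator 1) (ZMod.stdAddChar.mulShift η)‖ ≤
      1 / (2 * |((η * d).valMinAbs : ℝ)|) := by
  have hN : (0 : ℝ) < N := by exact_mod_cast (Fact.out : N.Prime).pos
  set z := ZMod.stdAddChar (η * d)
  have hv := abs_valMinAbs_pos hηd
  have hz : 4 * |((η * d).valMinAbs : ℝ)| / N ≤ ‖z - 1‖ :=
    four_mul_abs_valMinAbs_div_le_norm_stdAddChar_sub_one _
  have hz1 : z ≠ 1 := fun h => by
    rw [h, sub_self, norm_zero] at hz
    exact absurd hz (not_le.mpr (by positivity))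
  have hterm : ∀ t : ℕ, conj (ZMod.stdAddChar.mulShift η (a + d * t)) =
      conj (ZMod.stdAddChar (η * a) * z ^ t) := fun t => by
    rw [AddChar.mulShift_apply, mul_add, AddChar.map_add_eq_mul, ← AddChar.map_nsmul_eq_pow,
      nsmul_eq_mul]
    ring_nf
  rw [fourierChar, ZMod.card, sum_indicator_arithProg_mul a (right_ne_zero_of_mul hηd)]
  simp_rw [hterm, ← map_sum, ← mul_sum]
  have hc : ‖ZMod.stdAddChar (η * a)‖ = 1 := AddChar.norm_apply _ _
  rw [norm_mul, Complex.norm_conj, norm_mul, hc, one_mul,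
    norm_inv, Complex.norm_natCast]
  calc (N : ℝ)⁻¹ * ‖∑ t ∈ range (min L N), z ^ t‖ ≤ (N : ℝ)⁻¹ * (2 / ‖z - 1‖) := by
        gcongr
        exact norm_geom_sum_le_of_norm_eq_one (AddChar.norm_apply _ _) hz1 _
    _ ≤ (N : ℝ)⁻¹ * (2 / (4 * |((η * d).valMinAbs : ℝ)| / N)) := by gcongr
    _ = 1 / (2 * |((η * d).valMinAbs : ℝ)|) := by field_simp; ring

theorem sum_abs_valMinAbs_rpow_neg_le [NeZero N] {p : ℝ} (hp : 1 < p) :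
    ∑ θ : ZMod N, |(θ.valMinAbs : ℝ)| ^ (-p) ≤ ∑' z : ℤ, |(z : ℝ)| ^ (-p) := by
  rw [← sum_image (f := fun z : ℤ => |(z : ℝ)| ^ (-p)) ZMod.injective_valMinAbs.injOn]
  exact (Real.summable_abs_int_rpow hp).sum_le_tsum _ fun _ _ => by positivity

noncomputable def progressionConst (p : ℝ) : ℝ := 1 + ∑' z : ℤ, |(z : ℝ)| ^ (-p)

theorem one_le_progressionConst (p : ℝ) : 1 ≤ progressionConst p :=
  le_add_of_nonneg_right (tsum_nonneg fun _ => by positivity)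

theorem norm_fourierChar_indicator_arithProg_rpow_le [Fact N.Prime] (a : ZMod N) {d : ZMod N}
    (L : ℕ) {p : ℝ} (hp : 0 ≤ p) (η : ZMod N) :
    ‖fourierChar ((arithProg a d L).indicator 1) (ZMod.stdAddChar.mulShift η)‖ ^ p ≤
      (if η * d = 0 then 1 else 0) + |((η * d).valMinAbs : ℝ)| ^ (-p) := by
  split_ifs with hηd
  · exact le_add_of_le_of_nonneg
      (Real.rpow_le_one (norm_nonneg _) (norm_fourierChar_indicator_one_le _ _) hp)
      (by positivity)
  · have hv := abs_valMinAbs_pos hηd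
    rw [zero_add, Real.rpow_neg (abs_nonneg _), ← Real.inv_rpow (abs_nonneg _)]
    gcongr
    refine (norm_fourierChar_indicator_arithProg_le a L hηd).trans ?_
    rw [one_div]
    gcongr
    linarith

theorem sum_norm_fourierChar_indicator_arithProg_rpow_le [Fact N.Prime] (a d : ZMod N) (L : ℕ)
    {p : ℝ} (hp : 1 < p) :
    ∑ ψ, ‖fourierChar ((arithProg a d L).indicator 1) ψ‖ ^ p ≤ progressionConst p := by
  have hN : (1 : ℝ) ≤ N := by exact_mod_cast (Fact.out : N.Prime).one_lt.le
  rw [← Fintype.sum_bijective _ (bijective_mulShift_stdAddChar N) _ _ fun η => rfl]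
  by_cases hd : d = 0
  · have hS : arithProg a d L ⊆ {a} := by rintro y ⟨t, -, rfl⟩; simp [hd]
    calc _ ≤ ∑ _η : ZMod N, ((N : ℝ)⁻¹) ^ p := sum_le_sum fun η _ => by
          gcongr
          simpa using norm_fourierChar_indicator_le_of_subset_singleton hS _
      _ ≤ ∑ _η : ZMod N, (N : ℝ)⁻¹ := sum_le_sum fun η _ =>
          Real.rpow_le_self_of_le_one (by positivity) (inv_le_one_of_one_le₀ hN) hp.le
      _ = 1 := by simp
      _ ≤ progressionConst p := one_le_progressionConst p
  · calc _ ≤ ∑ η : ZMod N, ((if η * d = 0 then 1 else 0) + |((η * d).valMinAbs : ℝ)| ^ (-p)) :=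
          sum_le_sum fun η _ => norm_fourierChar_indicator_arithProg_rpow_le a L (by linarith) η
      _ = ∑ θ : ZMod N, ((if θ = 0 then 1 else 0) + |(θ.valMinAbs : ℝ)| ^ (-p)) :=
          Fintype.sum_equiv (Equiv.mulRight₀ d hd) _ _ fun η => rfl
      _ ≤ progressionConst p := by
          rw [sum_add_distrib, sum_ite_eq' univ (0 : ZMod N), if_pos (mem_univ _)]
          exact add_le_add_right (sum_abs_valMinAbs_rpow_neg_le (N := N) hp) 1

end Progression

theorem gowersU2p4_eq_sum {D N : ℕ} [NeZero N] (a : (Fin D → ZMod N) → ℂ) :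
    gowersU2p4 a = ((∑ ψ, ‖fourierChar a ψ‖ ^ 4 : ℝ) : ℂ) := by
  have hN : (N : ℂ) ≠ 0 := Nat.cast_ne_zero.mpr (NeZero.ne N)
  rw [gowersU2p4, sum_gowers_eq, Fintype.card_fun, ZMod.card, Fintype.card_fin]
  push_cast
  field_simp
  ring

theorem norm_gowersU2p4 {D N : ℕ} [NeZero N] (a : (Fin D → ZMod N) → ℂ) :
    ‖gowersU2p4 a‖ = ∑ ψ, ‖fourierChar a ψ‖ ^ 4 := by
  rw [gowersU2p4_eq_sum, Complex.norm_real, Real.norm_of_nonneg (by positivity)]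

theorem setOf_exists_forall_eq_pi_arithProg {ι : Type*} {N : ℕ} (n₀ M : ι → ZMod N) (L : ι → ℕ) :
    {x : ι → ZMod N | ∃ t : ι → ℕ, (∀ i, t i < L i) ∧ ∀ i, x i = n₀ i + M i * (t i : ZMod N)} =
      Set.univ.pi fun i => arithProg (n₀ i) (M i) (L i) := by
  ext x
  simp only [Set.mem_ofPred_eq, Set.mem_univ_pi, arithProg]
  constructor
  · rintro ⟨t, ht, hx⟩ i
    exact ⟨t i, ht i, hx i⟩
  · intro h
    choose t ht hx using h
    exact ⟨t, ht, hx⟩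

theorem indicator_univ_pi_apply_eq_mul_conj_prod {ι : Type*} [Fintype ι] {α : ι → Type*}
    (S : ∀ i, Set (α i)) (a : (∀ i, α i) → ℂ) (n : ∀ i, α i) :
    (Set.univ.pi S).indicator a n = a n * conj (∏ i, (S i).indicator 1 (n i)) := by
  rw [← Set.indicator_pi_one_apply, coe_univ]
  by_cases hn : n ∈ Set.univ.pi S <;> simp [hn]

theorem stmt13_general (D : ℕ) :
    ∃ C : ℝ, 0 < C ∧
      ∀ (N : ℕ) [NeZero N], N.Prime →
        ∀ (a : (Fin D → ZMod N) → ℂ) (n₀ M : Fin D → ZMod N) (L : Fin D → ℕ),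
          (‖(1 / (N : ℂ) ^ D) *
              ∑ n : Fin D → ZMod N,
                Set.indicator
                  {x : Fin D → ZMod N |
                    ∃ t : Fin D → ℕ, (∀ i, t i < L i) ∧ ∀ i, x i = n₀ i + M i * (t i : ZMod N)}
                  a n‖) ^ 4
            ≤ C ^ 4 * ‖gowersU2p4 a‖ := by
  set K := progressionConst (4 / 3)
  have hK : 1 ≤ K := one_le_progressionConst _
  refine ⟨K ^ D, by positivity, fun N _ hN a n₀ M L => ?_⟩
  have := Fact.mk hN
  rw [setOf_exists_forall_eq_pi_arithProg, norm_gowersU2p4]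
  set S := fun i => arithProg (n₀ i) (M i) (L i)
  have havg : (1 / (N : ℂ) ^ D) * ∑ n, (Set.univ.pi S).indicator a n =
      (Fintype.card (Fin D → ZMod N) : ℂ)⁻¹ *
        ∑ n, a n * conj (∏ i, (S i).indicator (1 : ZMod N → ℂ) (n i)) := by
    rw [Fintype.card_fun, ZMod.card, Fintype.card_fin, one_div, Nat.cast_pow]
    simp_rw [indicator_univ_pi_apply_eq_mul_conj_prod]
  have hb : ∑ ψ, ‖fourierChar (fun n : Fin D → ZMod N => ∏ i, (S i).indicator 1 (n i)) ψ‖ ^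
      (4 / 3 : ℝ) ≤ K ^ D := by
    rw [sum_norm_fourierChar_prod_rpow]
    calc _ ≤ ∏ _i : Fin D, K := prod_le_prod (fun _ _ => sum_nonneg fun _ _ => by positivity)
          fun i _ => sum_norm_fourierChar_indicator_arithProg_rpow_le _ _ _ (by norm_num)
      _ = K ^ D := by rw [prod_const, card_univ, Fintype.card_fin]
  rw [havg]
  calc _ ≤ (∑ ψ, ‖fourierChar a ψ‖ ^ 4) * (K ^ D) ^ 3 :=
        (norm_expect_mul_conj_pow_four_le _ _).trans (by gcongr)
    _ ≤ (K ^ D) ^ 4 * ∑ ψ, ‖fourierChar a ψ‖ ^ 4 := by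
        rw [mul_comm]
        gcongr
        · exact one_le_pow₀ hK
        · norm_num

/-- For `N` prime, averages of any function over `D`-dimensional
arithmetic progressions in `(ℤ/Nℤ)^D` are bounded by `C(D)` times the `U²`-norm. -/
theorem stmt13 (D : ℕ) (hD : 1 ≤ D) :
    ∃ C : ℝ, 0 < C ∧
      ∀ (N : ℕ) [NeZero N], N.Prime →
        ∀ (a : (Fin D → ZMod N) → ℂ) (n₀ M : Fin D → ZMod N) (L : Fin D → ℕ),
          (‖(1 / (N : ℂ) ^ D) *
              ∑ n : Fin D → ZMod N,
                Set.indicator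
                  {x : Fin D → ZMod N |
                    ∃ t : Fin D → ℕ, (∀ i, t i < L i) ∧ ∀ i, x i = n₀ i + M i * (t i : ZMod N)}
                  a n‖) ^ 4
            ≤ C ^ 4 * ‖gowersU2p4 a‖ :=
  stmt13_general D
end

section
/- Let f: ℤ → ℂ be a function with |f| ≤ 1. Then the following are equivalent: (1) for all a, b ∈ ℤ with a ≠ 0, lim_{N→∞} (1/N) Σ_{n=0}^{N−1} f(an+b) = 0; (2) lim_{N→∞} sup_{L ≥ 1, a≠0, b} |(1/(2N+1)) Σ_{n=−N}^{N} 1_{P_{a,b,L}}(n) f(n)| = 0, where P_{a,b,L} := {am+b : 0 ≤ m ≤ L−1}. In other words, aperiodicity of f along full arithmetic progressions implies uniform smallness of its averages over all finite arithmetic progressions inside [−N, N]. -/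
/-!
Write `b = a * q + r` with `0 ≤ r < |a|`. The terms of a progression of step `a` that lie in
`[-N, N]` form a block `t ∈ [t₀, t₁)` of the sequence `t ↦ f (a * t + r)`, with
`|t₀|, |t₁| ≤ N + |a|`, so their sum is a difference of two values of the two-sided primitive of
that sequence. Hypothesis (1), applied to the finitely many progressions `(a, r)` and
`(-a, r - a)` with `|a| ≤ A`, bounds these primitives by `ε |t| + C`, uniformly. A step
`|a| > A ≈ 2 / ε` is harmless anyway, since such a progression has at most `2N / |a| + 1` terms
in `[-N, N]`. Conversely, `P_{a,b,L}` lies inside `[-N, N]` for `N = (|a| + |b|) L`, so (2)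
controls its average.
-/

open Filter Finset Topology

section Primitive

variable {E : Type*}

/-- The two-sided primitive of `g`: `∑_{0 ≤ s < t} g s` for `t ≥ 0` and `-∑_{t ≤ s < 0} g s` for
`t < 0` (one of the two sums is always empty). -/
def intPrimitive [AddCommGroup E] (g : ℤ → E) (t : ℤ) : E :=
  ∑ m ∈ range t.toNat, g m - ∑ m ∈ range (-t).toNat, g (t + m)

lemma intPrimitive_add_one [AddCommGroup E] (g : ℤ → E) (t : ℤ) :
    intPrimitive g (t + 1) = intPrimitive g t + g t := by
  rcases le_or_gt 0 t with ht | ht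
  · obtain ⟨n, rfl⟩ := Int.eq_ofNat_of_zero_le ht
    rw [intPrimitive, intPrimitive, show ((n : ℤ) + 1).toNat = n + 1 by omega,
      show (-((n : ℤ) + 1)).toNat = 0 by omega, show (-(n : ℤ)).toNat = 0 by omega,
      Int.toNat_natCast, sum_range_succ]
    simp
  · rw [intPrimitive, intPrimitive, show (t + 1).toNat = 0 by omega, show t.toNat = 0 by omega,
      show (-t).toNat = (-(t + 1)).toNat + 1 by omega, sum_range_succ']
    simp only [range_zero, sum_empty, zero_sub, Nat.cast_add, Nat.cast_one, Nat.cast_zero,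
      add_zero, ← add_assoc, add_right_comm t]
    abel

lemma sum_range_eq_intPrimitive_sub [AddCommGroup E] (g : ℤ → E) (q : ℤ) (n : ℕ) :
    ∑ m ∈ range n, g (q + m) = intPrimitive g (q + n) - intPrimitive g q := by
  induction n with
  | zero => simp
  | succ n ih =>
    rw [sum_range_succ, ih, Nat.cast_succ, ← add_assoc, intPrimitive_add_one]
    abel

lemma norm_intPrimitive_le [SeminormedAddCommGroup E] {g : ℤ → E} {ε C : ℝ}
    (hpos : ∀ n : ℕ, ‖∑ m ∈ range n, g m‖ ≤ ε * n + C)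
    (hneg : ∀ n : ℕ, ‖∑ m ∈ range n, g (-(m + 1))‖ ≤ ε * n + C) (t : ℤ) :
    ‖intPrimitive g t‖ ≤ ε * |(t : ℝ)| + C := by
  obtain ⟨n, rfl | rfl⟩ := Int.eq_nat_or_neg t
  · simpa [intPrimitive] using hpos n
  · have hrefl : ∑ m ∈ range n, g (-n + m) = ∑ m ∈ range n, g (-(m + 1)) := by
      rw [← sum_range_reflect]
      refine sum_congr rfl fun m hm => ?_
      rw [mem_range] at hm
      congr 1
      omega
    simpa [intPrimitive, hrefl] using hneg n

end Primitive

def progression (a b : ℤ) (L : ℕ) : Set ℤ := {x | ∃ m : ℕ, m < L ∧ x = a * m + b}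

lemma sum_indicator_progression {E : Type*} [AddCommMonoid E] (f : ℤ → E) (S : Finset ℤ)
    {a : ℤ} (ha : a ≠ 0) (b : ℤ) (L : ℕ) :
    ∑ n ∈ S, (progression a b L).indicator f n =
      ∑ m ∈ (range L).filter (fun m : ℕ => a * m + b ∈ S), f (a * m + b) := by
  classical
  rw [sum_indicator_eq_sum_filter, ← sum_image (g := fun m : ℕ => a * m + b)]
  · congr 1
    ext n
    rw [mem_filter, mem_image]
    simp only [mem_filter, mem_range, progression, Set.mem_ofPred_eq]
    constructor
    · rintro ⟨hn, m, hm, rfl⟩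
      exact ⟨m, ⟨hm, hn⟩, rfl⟩
    · rintro ⟨m, ⟨hm, hn⟩, rfl⟩
      exact ⟨hn, m, hm, rfl⟩
  · intro m _ m' _ h
    simpa [ha] using h

lemma Finset.eq_Icc_min'_max' {α : Type*} [LinearOrder α] [LocallyFiniteOrder α] {s : Finset α}
    (hs : (s : Set α).OrdConnected) (hne : s.Nonempty) :
    s = Icc (s.min' hne) (s.max' hne) := by
  ext x
  refine ⟨fun hx => mem_Icc.2 ⟨min'_le s x hx, le_max' s x hx⟩, fun hx => ?_⟩
  exact_mod_cast hs.out (s.min'_mem hne) (s.max'_mem hne) (mem_Icc.1 hx)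

lemma ordConnected_filter_abs_mul_add_le (a b : ℤ) (L N : ℕ) :
    (((range L).filter (fun m : ℕ => |a * m + b| ≤ N) : Finset ℕ) : Set ℕ).OrdConnected := by
  refine ⟨fun x hx y hy z hz => ?_⟩
  simp only [coe_filter, mem_range, Set.mem_ofPred_eq, abs_le] at hx hy ⊢
  have hxz : (x : ℤ) ≤ z := by exact_mod_cast hz.1
  have hzy : (z : ℤ) ≤ y := by exact_mod_cast hz.2
  refine ⟨by omega, ?_, ?_⟩ <;> rcases le_total 0 a with ha | ha <;> nlinarith

lemma norm_one_div_natCast_mul (n : ℕ) (z : ℂ) : ‖1 / (n : ℂ) * z‖ = ‖z‖ / n := by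
  rw [norm_mul, norm_div, norm_one, Complex.norm_natCast, one_div_mul_eq_div]

lemma exists_forall_norm_le_mul_add {ι : Type*} {s : Finset ι} {S : ι → ℕ → ℂ}
    (hS : ∀ i ∈ s, Tendsto (fun n : ℕ => 1 / (n : ℂ) * S i n) atTop (𝓝 0))
    {ε : ℝ} (hε : 0 < ε) :
    ∃ C, 0 ≤ C ∧ ∀ i ∈ s, ∀ n : ℕ, ‖S i n‖ ≤ ε * n + C := by
  have hlarge : ∀ᶠ n : ℕ in atTop, ∀ i ∈ s, ‖S i n‖ ≤ ε * n := by
    rw [eventually_all_finset]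
    intro i hi
    filter_upwards [(NormedAddGroup.tendsto_nhds_zero.1 (hS i hi)) ε hε,
      eventually_gt_atTop 0] with n hn hn0
    have hn0' : (0 : ℝ) < n := by exact_mod_cast hn0
    rw [norm_one_div_natCast_mul, div_lt_iff₀ hn0'] at hn
    linarith
  obtain ⟨n₀, hn₀⟩ := eventually_atTop.1 hlarge
  set C := ∑ p ∈ s ×ˢ range n₀, ‖S p.1 p.2‖
  refine ⟨C, sum_nonneg fun _ _ => norm_nonneg _, fun i hi n => ?_⟩
  rcases le_or_gt n₀ n with hn | hn
  · linarith [hn₀ n hn i hi, (sum_nonneg fun _ _ => norm_nonneg _ : 0 ≤ C)]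
  · have hle : ‖S i n‖ ≤ C :=
      single_le_sum (f := fun p => ‖S p.1 p.2‖) (fun _ _ => norm_nonneg _) (a := (i, n))
        (mem_product.2 ⟨hi, mem_range.2 hn⟩)
    have : 0 ≤ ε * n := by positivity
    linarith

lemma abs_lt_of_abs_mul_add_le {a r t N : ℤ} (hr₀ : 0 ≤ r) (hra : r < |a|)
    (h : |a * t + r| ≤ N) : |t| < N + |a| := by
  have hat : |a| * |t| ≤ N + r := by
    rw [← abs_mul]
    calc |a * t| = |(a * t + r) - r| := by ring_nf
      _ ≤ |a * t + r| + |r| := abs_sub _ _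
      _ ≤ N + r := by rw [abs_of_nonneg hr₀]; linarith
  have ha : 1 ≤ |a| := by omega
  nlinarith [abs_nonneg t]

section Blocks

variable {E : Type*} [SeminormedAddCommGroup E] {f : ℤ → E} {a b : ℤ} {m₀ m₁ N : ℕ}

lemma norm_sum_Icc_le_of_abs_le {ε C : ℝ} {A : ℕ}
    (hC : ∀ a r : ℤ, a ≠ 0 → |a| ≤ A → |r| ≤ 2 * A →
      ∀ n : ℕ, ‖∑ m ∈ range n, f (a * m + r)‖ ≤ ε * n + C)
    (hε : 0 ≤ ε) (ha : a ≠ 0) (haA : |a| ≤ A) (hm : m₀ ≤ m₁)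
    (h₀ : |a * m₀ + b| ≤ N) (h₁ : |a * m₁ + b| ≤ N) :
    ‖∑ m ∈ Icc m₀ m₁, f (a * m + b)‖ ≤ 2 * ε * (N + A) + 2 * C := by
  set r := b % a
  set q := b / a
  have hb : b = a * q + r := (Int.mul_ediv_add_emod b a).symm
  have hr₀ : 0 ≤ r := Int.emod_nonneg b ha
  have hra : r < |a| := by simpa using Int.emod_lt b ha
  set g : ℤ → E := fun t => f (a * t + r)
  have hpos : ∀ n : ℕ, ‖∑ m ∈ range n, g m‖ ≤ ε * n + C :=
    hC a r ha haA (by rw [abs_of_nonneg hr₀]; omega)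
  have hneg : ∀ n : ℕ, ‖∑ m ∈ range n, g (-(m + 1))‖ ≤ ε * n + C := by
    intro n
    simp only [g, show ∀ m : ℤ, a * -(m + 1) + r = -a * m + (r - a) from fun m => by ring]
    exact hC (-a) (r - a) (neg_ne_zero.2 ha) (by rwa [abs_neg])
      (by rw [abs_le]; constructor <;> cases abs_cases a <;> omega) n
  have hG : ∀ t : ℤ, |t| ≤ N + A → ‖intPrimitive g t‖ ≤ ε * (N + A) + C := by
    intro t ht
    have ht' : |(t : ℝ)| ≤ N + A := by exact_mod_cast ht
    nlinarith [norm_intPrimitive_le hpos hneg t]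
  have hsum : ∑ m ∈ Icc m₀ m₁, f (a * m + b) =
      intPrimitive g (q + m₁ + 1) - intPrimitive g (q + m₀) := by
    rw [← Ico_add_one_right_eq_Icc, sum_Ico_eq_sum_range,
      show q + m₁ + 1 = q + m₀ + ((m₁ + 1 - m₀ : ℕ) : ℤ) by omega,
      ← sum_range_eq_intPrimitive_sub]
    refine sum_congr rfl fun k _ => ?_
    simp only [g, hb]
    push_cast
    ring_nf
  have ht₀ : |q + m₀| < N + |a| :=
    abs_lt_of_abs_mul_add_le hr₀ hra (by convert h₀ using 2; rw [hb]; ring)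
  have ht₁ : |q + m₁| < N + |a| :=
    abs_lt_of_abs_mul_add_le hr₀ hra (by convert h₁ using 2; rw [hb]; ring)
  have ht₁' : |q + m₁ + 1| ≤ N + A := by
    cases abs_cases (q + m₁ + 1) <;> cases abs_cases (q + (m₁ : ℤ)) <;> omega
  rw [hsum]
  calc ‖intPrimitive g (q + m₁ + 1) - intPrimitive g (q + m₀)‖
      ≤ ‖intPrimitive g (q + m₁ + 1)‖ + ‖intPrimitive g (q + m₀)‖ := norm_sub_le _ _
    _ ≤ (ε * (N + A) + C) + (ε * (N + A) + C) := add_le_add (hG _ ht₁') (hG _ (by omega))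
    _ = 2 * ε * (N + A) + 2 * C := by ring

lemma norm_sum_Icc_le_div_abs_add_one (hf : ∀ n, ‖f n‖ ≤ 1) (ha : a ≠ 0) (hm : m₀ ≤ m₁)
    (h₀ : |a * m₀ + b| ≤ N) (h₁ : |a * m₁ + b| ≤ N) :
    ‖∑ m ∈ Icc m₀ m₁, f (a * m + b)‖ ≤ 2 * N / |(a : ℝ)| + 1 := by
  have hcard : ‖∑ m ∈ Icc m₀ m₁, f (a * m + b)‖ ≤ ((m₁ : ℝ) - m₀) + 1 := by
    calc ‖∑ m ∈ Icc m₀ m₁, f (a * m + b)‖ ≤ ∑ m ∈ Icc m₀ m₁, (1 : ℝ) :=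
          norm_sum_le_of_le _ fun m _ => hf _
      _ = ((m₁ : ℝ) - m₀) + 1 := by
          rw [sum_const, Nat.card_Icc, nsmul_one, Nat.cast_sub (by omega)]
          push_cast
          ring
  have hdiff : |a| * ((m₁ : ℤ) - m₀) ≤ 2 * N := by
    rw [← abs_of_nonneg (sub_nonneg.2 (Nat.cast_le.2 hm) : (0 : ℤ) ≤ m₁ - m₀), ← abs_mul]
    calc |a * ((m₁ : ℤ) - m₀)| = |(a * m₁ + b) - (a * m₀ + b)| := by ring_nf
      _ ≤ |a * m₁ + b| + |a * m₀ + b| := abs_sub _ _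
      _ ≤ 2 * N := by linarith
  have ha' : (0 : ℝ) < |(a : ℝ)| := abs_pos.2 (Int.cast_ne_zero.2 ha)
  have hdiff' : |(a : ℝ)| * ((m₁ : ℝ) - m₀) ≤ 2 * N := by exact_mod_cast hdiff
  rw [div_add_one ha'.ne', le_div_iff₀ ha']
  nlinarith

end Blocks

lemma eventually_norm_sum_Icc_le {f : ℤ → ℂ} (hf : ∀ n, ‖f n‖ ≤ 1)
    (H : ∀ a b : ℤ, a ≠ 0 →
      Tendsto (fun N : ℕ => 1 / (N : ℂ) * ∑ n ∈ range N, f (a * n + b)) atTop (𝓝 0))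
    {ε : ℝ} (hε : 0 < ε) :
    ∀ᶠ N : ℕ in atTop, ∀ a b : ℤ, a ≠ 0 → ∀ m₀ m₁ : ℕ, m₀ ≤ m₁ →
      |a * m₀ + b| ≤ N → |a * m₁ + b| ≤ N →
      ‖∑ m ∈ Icc m₀ m₁, f (a * m + b)‖ ≤ ε * (2 * N + 1) := by
  obtain ⟨A, hA⟩ := exists_nat_ge (2 / ε)
  obtain ⟨C, hC₀, hC⟩ := exists_forall_norm_le_mul_add
    (s := (Icc (-(A : ℤ)) A ×ˢ Icc (-(2 * A : ℤ)) (2 * A)).filter (·.1 ≠ 0))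
    (S := fun p n => ∑ m ∈ range n, f (p.1 * m + p.2))
    (fun p hp => H p.1 p.2 (mem_filter.1 hp).2) (half_pos hε)
  have hC' : ∀ a r : ℤ, a ≠ 0 → |a| ≤ A → |r| ≤ 2 * A →
      ∀ n : ℕ, ‖∑ m ∈ range n, f (a * m + r)‖ ≤ ε / 2 * n + C := fun a r ha haA hr =>
    hC (a, r) <| mem_filter.2
      ⟨mem_product.2 ⟨mem_Icc.2 (abs_le.1 haA), mem_Icc.2 (abs_le.1 hr)⟩, ha⟩
  filter_upwards [(tendsto_natCast_atTop_atTop.const_mul_atTop hε).eventually_ge_atTop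
    (ε * A + 2 * C + 1)] with N hN a b ha m₀ m₁ hm h₀ h₁
  rcases le_or_gt |a| A with haA | haA
  · calc ‖∑ m ∈ Icc m₀ m₁, f (a * m + b)‖ ≤ 2 * (ε / 2) * (N + A) + 2 * C :=
          norm_sum_Icc_le_of_abs_le hC' (half_pos hε).le ha haA hm h₀ h₁
      _ ≤ ε * (2 * N + 1) := by nlinarith
  · have hεa : 2 ≤ ε * |(a : ℝ)| := by
      have : (A : ℝ) < |(a : ℝ)| := by exact_mod_cast haA
      rw [div_le_iff₀ hε] at hA
      nlinarith
    have ha' : (0 : ℝ) < |(a : ℝ)| := by positivity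
    calc ‖∑ m ∈ Icc m₀ m₁, f (a * m + b)‖ ≤ 2 * N / |(a : ℝ)| + 1 :=
          norm_sum_Icc_le_div_abs_add_one hf ha hm h₀ h₁
      _ ≤ ε * N + 1 := by
          gcongr
          rw [div_le_iff₀ ha']
          nlinarith [(Nat.cast_nonneg N : (0 : ℝ) ≤ N)]
      _ ≤ ε * (2 * N + 1) := by nlinarith

lemma norm_sum_indicator_progression_le {E : Type*} [SeminormedAddCommGroup E] {f : ℤ → E}
    {N : ℕ} {B : ℝ} (hB₀ : 0 ≤ B)
    (hB : ∀ a b : ℤ, a ≠ 0 → ∀ m₀ m₁ : ℕ, m₀ ≤ m₁ → |a * m₀ + b| ≤ N → |a * m₁ + b| ≤ N →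
      ‖∑ m ∈ Icc m₀ m₁, f (a * m + b)‖ ≤ B)
    (L : ℕ) {a : ℤ} (ha : a ≠ 0) (b : ℤ) :
    ‖∑ n ∈ Icc (-(N : ℤ)) N, (progression a b L).indicator f n‖ ≤ B := by
  have hfilter : (range L).filter (fun m : ℕ => a * m + b ∈ Icc (-(N : ℤ)) N) =
      (range L).filter (fun m : ℕ => |a * m + b| ≤ N) :=
    filter_congr fun m _ => by rw [mem_Icc, abs_le]
  rw [sum_indicator_progression _ _ ha, hfilter]
  set s := (range L).filter fun m : ℕ => |a * m + b| ≤ N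
  rcases s.eq_empty_or_nonempty with hs | hne
  · simpa [hs] using hB₀
  rw [s.eq_Icc_min'_max' (ordConnected_filter_abs_mul_add_le a b L N) hne]
  exact hB a b ha _ _ (min'_le s _ (s.max'_mem hne)) (mem_filter.1 (s.min'_mem hne)).2
    (mem_filter.1 (s.max'_mem hne)).2

lemma tendsto_average_of_uniform {f : ℤ → ℂ}
    (H : ∀ ε : ℝ, 0 < ε → ∃ N₀ : ℕ, ∀ N : ℕ, N₀ ≤ N → ∀ (L : ℕ) (a b : ℤ), a ≠ 0 →
      ‖∑ n ∈ Icc (-(N : ℤ)) N, (progression a b L).indicator f n‖ ≤ ε * (2 * N + 1))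
    {a : ℤ} (ha : a ≠ 0) (b : ℤ) :
    Tendsto (fun L : ℕ => 1 / (L : ℂ) * ∑ m ∈ range L, f (a * m + b)) atTop (𝓝 0) := by
  rw [Metric.nhds_basis_closedBall.tendsto_right_iff]
  intro ε hε
  set K := a.natAbs + b.natAbs
  have hK : 0 < K := by have := Int.natAbs_pos.2 ha; omega
  obtain ⟨N₀, hN₀⟩ := H (ε / (2 * K + 1)) (by positivity)
  filter_upwards [eventually_ge_atTop N₀, eventually_gt_atTop 0] with L hL hL₀
  have hmem : ∀ m ∈ range L, a * m + b ∈ Icc (-((K * L : ℕ) : ℤ)) (K * L : ℕ) := by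
    intro m hm
    rw [mem_Icc, ← abs_le]
    have hm' : (m : ℤ) ≤ L := by exact_mod_cast (mem_range.1 hm).le
    calc |a * m + b| ≤ |a| * m + |b| := by
          simpa [abs_mul] using abs_add_le (a * m) b
      _ ≤ |a| * L + |b| * L := by
          have : (1 : ℤ) ≤ L := by exact_mod_cast hL₀
          gcongr
          exact le_mul_of_one_le_right (abs_nonneg b) this
      _ = (K * L : ℕ) := by push_cast [K, Int.natCast_natAbs]; ring
  have key := hN₀ (K * L) (hL.trans (Nat.le_mul_of_pos_left L hK)) L a b ha
  rw [sum_indicator_progression _ _ ha, filter_true_of_mem hmem] at key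
  have hL₀' : (0 : ℝ) < L := by exact_mod_cast hL₀
  rw [Metric.mem_closedBall, dist_zero_right, norm_one_div_natCast_mul, div_le_iff₀ hL₀']
  calc ‖∑ m ∈ range L, f (a * m + b)‖ ≤ ε / (2 * K + 1) * (2 * (K * L : ℕ) + 1) := key
    _ ≤ ε / (2 * K + 1) * ((2 * K + 1) * L) := by
        gcongr
        have : (1 : ℝ) ≤ L := by exact_mod_cast hL₀
        push_cast
        linarith
    _ = ε * L := by field_simp

/-- For `f : ℤ → ℂ` with `|f| ≤ 1`, aperiodicity along all (infinite)
arithmetic progressions is equivalent to uniform smallness of the averages of `f`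
over all finite arithmetic progressions `P_{a,b,L} = {am+b : 0 ≤ m < L}` inside
`[−N, N]`. -/
theorem stmt15 (f : ℤ → ℂ) (hf : ∀ n, ‖f n‖ ≤ 1) :
    (∀ a b : ℤ, a ≠ 0 →
      Tendsto (fun N : ℕ => (1 / (N : ℂ)) * ∑ n ∈ Finset.range N, f (a * n + b))
        atTop (nhds 0)) ↔
    (∀ ε : ℝ, 0 < ε → ∃ N₀ : ℕ, ∀ N : ℕ, N₀ ≤ N →
      ∀ (L : ℕ) (a b : ℤ), a ≠ 0 →
        ‖(1 / (2 * (N : ℂ) + 1)) *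
            ∑ n ∈ Finset.Icc (-(N : ℤ)) (N : ℤ),
              Set.indicator {x : ℤ | ∃ m : ℕ, m < L ∧ x = a * m + b} f n‖ ≤ ε) := by
  have hnorm (N : ℕ) (z : ℂ) (ε : ℝ) :
      ‖1 / (2 * (N : ℂ) + 1) * z‖ ≤ ε ↔ ‖z‖ ≤ ε * (2 * N + 1) := by
    rw [show 2 * (N : ℂ) + 1 = ((2 * N + 1 : ℕ) : ℂ) by push_cast; ring,
      norm_one_div_natCast_mul, div_le_iff₀ (by positivity)]
    push_cast
    rfl
  constructor
  · intro H ε hε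
    obtain ⟨N₀, hN₀⟩ := eventually_atTop.1 (eventually_norm_sum_Icc_le hf H hε)
    exact ⟨N₀, fun N hN L a b ha =>
      (hnorm N _ ε).2 (norm_sum_indicator_progression_le (by positivity) (hN₀ N hN) L ha b)⟩
  · intro H a b ha
    refine tendsto_average_of_uniform (fun ε hε => ?_) ha b
    obtain ⟨N₀, hN₀⟩ := H ε hε
    exact ⟨N₀, fun N hN L a b ha => (hnorm N _ ε).1 (hN₀ N hN L a b ha)⟩
end
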